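/- Suppose F = {Y_α : α < θ} is a maximal μ-free family (μ regular). Then there exists a condition p* ∈ Add(μ,θ) such that the family {X_{p*} ∩ Y_α : α ∉ dom(p*)} is a densely maximal μ-free family of subsets of X_{p*}. -/

import Mathlib

open Cardinal Set

universe u

/-- A condition of the Cohen forcing `Add(μ, I)`: a pair of disjoint subsets of the
index set `I`, both of cardinality `< μ` (the positive and negative coordinates of a
partial function `I → 2` of size `< μ`). -/
structure AddCond (μ : Cardinal.{u}) (I : Type u) where
  pos : Set I
  neg : Set I
  disj : Disjoint pos neg
  posSmall : #pos < μ
  negSmall : #neg < μ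

/-- `q` extends (is stronger than) `p`. -/
def AddLe {μ : Cardinal.{u}} {I : Type u} (q p : AddCond μ I) : Prop :=
  p.pos ⊆ q.pos ∧ p.neg ⊆ q.neg

/-- The Boolean combination of the family `f` coded by the condition `p`:
`X_p = ⋂_{i ∈ pos} f i \ ⋃_{i ∈ neg} f i`. -/
def XInd {μ : Cardinal.{u}} {I : Type u} {S : Type u} (f : I → Set S)
    (p : AddCond μ I) : Set S :=
  (⋂ i ∈ p.pos, f i) \ ⋃ i ∈ p.neg, f i

/-- The density ideal of the family `f`: `Y` belongs to it iff the set of conditions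
`p` with `X_p ∩ Y = ∅` is dense in `Add(μ, I)`. -/
def densityIdeal {I : Type u} {S : Type u} (μ : Cardinal.{u}) (f : I → Set S) :
    Set (Set S) :=
  {Y | ∀ p : AddCond μ I, ∃ q : AddCond μ I, AddLe q p ∧ XInd f q ∩ Y = ∅}

/-- `μ`-freeness for set families: every Boolean combination of fewer than `μ`
members is nonempty. -/
def MuFree {S : Type u} (μ : Cardinal.{u}) (F : Set (Set S)) : Prop :=
  ∀ A B : Set (Set S), A ⊆ F → B ⊆ F → Disjoint A B → #A < μ → #B < μ →
    (⋂₀ A \ ⋃₀ B).Nonempty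

/-!
Suppose no condition works. Since the family is `μ`-free every `X_q` is nonempty, so the
conditions `q` carrying a set `A ⊆ X_q` that splits every `X_r` with `r ≤ q` are dense.
Pick a maximal antichain `Q` of such conditions with witnesses `A_q` and put
`B = ⋃_{q ∈ Q} A_q`. Members of `Q` are incompatible, so `X_q` are pairwise disjoint and
`B ∩ X_q = A_q`; as `Q` is predense, `B` splits every `X_p`. Then `B` can be added to the
family without losing `μ`-freeness, so by maximality `B = Y_i` for some `i`, which is
absurd since `B` would then contain `X_p` for `p = {i ↦ 1}`.
-/

section Compatible

variable {α : Type*} [Preorder α]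

def Compatible (a b : α) : Prop := ∃ r, r ≤ a ∧ r ≤ b

theorem Compatible.symm {a b : α} (h : Compatible a b) : Compatible b a :=
  let ⟨r, hra, hrb⟩ := h
  ⟨r, hrb, hra⟩

theorem exists_antichain_predense_of_dense {D : Set α} (hD : ∀ p, ∃ q ∈ D, q ≤ p) :
    ∃ Q ⊆ D, Q.Pairwise (fun a b => ¬ Compatible a b) ∧
      ∀ p, ∃ q ∈ Q, Compatible p q := by
  obtain ⟨Q, hQ⟩ := zorn_subset {Q | Q ⊆ D ∧ Q.Pairwise (fun a b => ¬ Compatible a b)}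
    fun c hc hchain => ⟨⋃₀ c, ⟨sUnion_subset fun s hs => (hc hs).1,
      hchain.pairwise_sUnion.2 fun s hs => (hc hs).2⟩, fun _ => subset_sUnion_of_mem⟩
  refine ⟨Q, hQ.prop.1, hQ.prop.2, fun p => ?_⟩
  by_contra! hp
  obtain ⟨q, hqD, hqp⟩ := hD p
  have hq : ∀ b ∈ Q, ¬ Compatible q b := fun b hb ⟨r, hrq, hrb⟩ =>
    hp b hb ⟨r, hrq.trans hqp, hrb⟩
  have hqQ : q ∈ Q := hQ.mem_of_prop_insert
    ⟨insert_subset hqD hQ.prop.1,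
      hQ.prop.2.insert fun b hb _ => ⟨hq b hb, fun h => hq b hb h.symm⟩⟩
  exact hq q hqQ ⟨q, le_rfl, le_rfl⟩

end Compatible

section Splits

variable {S : Type*} {A B X X' : Set S}

def Splits (B X : Set S) : Prop := (X ∩ B).Nonempty ∧ (X \ B).Nonempty

theorem Splits.mono (h : Splits B X) (hX : X ⊆ X') : Splits B X' :=
  ⟨h.1.mono (inter_subset_inter_left B hX), h.2.mono (sdiff_subset_sdiff_left hX)⟩

theorem Splits.congr (h : Splits A X) (hAB : X ∩ A = X ∩ B) : Splits B X := by
  refine ⟨hAB ▸ h.1, ?_⟩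
  rw [← sdiff_self_inter, ← hAB, sdiff_self_inter]
  exact h.2

end Splits

namespace AddCond

variable {μ : Cardinal.{u}} {I S : Type u}

instance : Preorder (AddCond μ I) where
  le q p := AddLe q p
  le_refl p := ⟨subset_rfl, subset_rfl⟩
  le_trans _ _ _ h₁ h₂ := ⟨h₂.1.trans h₁.1, h₂.2.trans h₁.2⟩

theorem mem_XInd {f : I → Set S} {p : AddCond μ I} {x : S} :
    x ∈ XInd f p ↔ (∀ i ∈ p.pos, x ∈ f i) ∧ ∀ i ∈ p.neg, x ∉ f i := by
  simp [XInd]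

theorem monotone_XInd (f : I → Set S) : Monotone (XInd (μ := μ) f) := fun _ _ h _ hx =>
  mem_XInd.2 ⟨fun i hi => (mem_XInd.1 hx).1 i (h.1 hi),
    fun i hi => (mem_XInd.1 hx).2 i (h.2 hi)⟩

def single (hμ : 1 < μ) (i : I) : AddCond μ I where
  pos := {i}
  neg := ∅
  disj := disjoint_empty _
  posSmall := (mk_singleton i).trans_lt hμ
  negSmall := by simpa using zero_lt_one.trans hμ

theorem XInd_single_subset (f : I → Set S) (hμ : 1 < μ) (i : I) :
    XInd f (single hμ i) ⊆ f i :=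
  fun _ hx => (mem_XInd.1 hx).1 i rfl

theorem XInd_nonempty {Y : I → Set S} (hinj : Function.Injective Y)
    (hfree : MuFree μ (range Y)) (q : AddCond μ I) : (XInd Y q).Nonempty := by
  have := hfree (Y '' q.pos) (Y '' q.neg) (image_subset_range _ _) (image_subset_range _ _)
    ((disjoint_image_iff hinj).2 q.disj)
    (mk_image_le.trans_lt q.posSmall) (mk_image_le.trans_lt q.negSmall)
  rwa [sInter_image, sUnion_image] at this

/-- The union of `p` and `q` is a common extension: `x` witnesses that its positive and
negative parts are disjoint. -/
theorem compatible_of_mem_XInd (hμ : ℵ₀ ≤ μ) {f : I → Set S} {p q : AddCond μ I} {x : S}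
    (hp : x ∈ XInd f p) (hq : x ∈ XInd f q) : Compatible p q := by
  rw [mem_XInd] at hp hq
  have hpos : p.pos ∪ q.pos ⊆ {i | x ∈ f i} := union_subset hp.1 hq.1
  have hneg : p.neg ∪ q.neg ⊆ {i | x ∈ f i}ᶜ := union_subset hp.2 hq.2
  refine ⟨⟨p.pos ∪ q.pos, p.neg ∪ q.neg, disjoint_compl_right.mono hpos hneg,
    (mk_union_le _ _).trans_lt (add_lt_of_lt hμ p.posSmall q.posSmall),
    (mk_union_le _ _).trans_lt (add_lt_of_lt hμ p.negSmall q.negSmall)⟩,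
    ⟨subset_union_left, subset_union_left⟩, ⟨subset_union_right, subset_union_right⟩⟩

theorem splits_biUnion_of_antichain (hμ : ℵ₀ ≤ μ) {f : I → Set S} {Q : Set (AddCond μ I)}
    (hanti : Q.Pairwise (fun a b => ¬ Compatible a b)) (hpre : ∀ p, ∃ q ∈ Q, Compatible p q)
    {A : AddCond μ I → Set S} (hA : ∀ q ∈ Q, A q ⊆ XInd f q)
    (hsplit : ∀ q ∈ Q, ∀ r ≤ q, Splits (A q) (XInd f r)) (p : AddCond μ I) :
    Splits (⋃ q ∈ Q, A q) (XInd f p) := by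
  obtain ⟨q, hqQ, r, hrp, hrq⟩ := hpre p
  have hBq : XInd f q ∩ A q = XInd f q ∩ ⋃ q' ∈ Q, A q' := by
    refine subset_antisymm (inter_subset_inter_right _ (subset_biUnion_of_mem hqQ)) ?_
    rintro x ⟨hxq, hxB⟩
    obtain ⟨q', hq'Q, hxq'⟩ := mem_iUnion₂.1 hxB
    obtain rfl : q' = q := by_contra fun hne =>
      hanti hq'Q hqQ hne (compatible_of_mem_XInd hμ (hA q' hq'Q hxq') hxq)
    exact ⟨hxq, hxq'⟩
  have hBr : XInd f r ∩ A q = XInd f r ∩ ⋃ q' ∈ Q, A q' := by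
    rw [← inter_eq_left.2 (monotone_XInd f hrq), inter_assoc, hBq, ← inter_assoc]
  exact ((hsplit q hqQ r hrq).congr hBr).mono (monotone_XInd f hrp)

/-- A Boolean combination of the enlarged family contains `X_p ∩ B` or `X_p \ B` for the
condition `p` read off from its members of the form `Y i`. -/
theorem muFree_insert_of_splits {Y : I → Set S} (hinj : Function.Injective Y) {B : Set S}
    (hB : ∀ p : AddCond μ I, Splits B (XInd Y p)) : MuFree μ (insert B (range Y)) := by
  intro P N hP hN hPN hPs hNs
  let p : AddCond μ I := ⟨Y ⁻¹' P, Y ⁻¹' N, hPN.preimage Y,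
    (mk_preimage_of_injective Y P hinj).trans_lt hPs,
    (mk_preimage_of_injective Y N hinj).trans_lt hNs⟩
  have key : ∀ x ∈ XInd Y p, (B ∈ P → x ∈ B) → (B ∈ N → x ∉ B) →
      x ∈ ⋂₀ P \ ⋃₀ N := by
    intro x hx hBP hBN
    rw [mem_XInd] at hx
    refine ⟨fun Z hZ => ?_, fun ⟨Z, hZ, hxZ⟩ => ?_⟩
    · rcases hP hZ with rfl | ⟨i, rfl⟩
      exacts [hBP hZ, hx.1 i hZ]
    · rcases hN hZ with rfl | ⟨i, rfl⟩
      exacts [hBN hZ hxZ, hx.2 i hZ hxZ]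
  by_cases hBP : B ∈ P
  · obtain ⟨x, hxp, hxB⟩ := (hB p).1
    exact ⟨x, key x hxp (fun _ => hxB) fun hBN => absurd hBN (disjoint_left.1 hPN hBP)⟩
  · obtain ⟨x, hxp, hxB⟩ := (hB p).2
    exact ⟨x, key x hxp (fun h => absurd h hBP) fun _ => hxB⟩

end AddCond

open AddCond

/-- If `F = {Y_α : α < θ}` is a maximal `μ`-free family (`μ` regular),
then there is a condition `p* ∈ Add(μ,θ)` below which the restricted family is a
densely maximal `μ`-free family of subsets of `X_{p*}`: every Boolean combination
below `p*` is nonempty, and for every `q ≤ p*` and every `A ⊆ X_q` there is `r ≤ q`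
with `X_r ∩ A = ∅` or `X_r ⊆ A`. -/
theorem stmt_7 {I : Type u} {S : Type u} (μ : Cardinal.{u}) (hμ : μ.IsRegular)
    (Y : I → Set S) (hinj : Function.Injective Y)
    (hfree : MuFree μ (Set.range Y))
    (hmax : ∀ B : Set S, MuFree μ (insert B (Set.range Y)) → B ∈ Set.range Y) :
    ∃ pstar : AddCond μ I,
      (∀ q : AddCond μ I, AddLe q pstar → (XInd Y q).Nonempty) ∧
      (∀ q : AddCond μ I, AddLe q pstar → ∀ A ⊆ XInd Y q,
        ∃ r : AddCond μ I, AddLe r q ∧ (XInd Y r ∩ A = ∅ ∨ XInd Y r ⊆ A)) := by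
  suffices ∃ pstar : AddCond μ I, ∀ q ≤ pstar, ∀ A ⊆ XInd Y q,
      ∃ r ≤ q, XInd Y r ∩ A = ∅ ∨ XInd Y r ⊆ A by
    obtain ⟨pstar, h⟩ := this
    exact ⟨pstar, fun q _ => XInd_nonempty hinj hfree q, h⟩
  by_contra! hbad
  have hdense : ∀ p : AddCond μ I,
      ∃ q ∈ {q | ∃ A ⊆ XInd Y q, ∀ r ≤ q, Splits A (XInd Y r)}, q ≤ p := fun p =>
    let ⟨q, hqp, A, hA, hr⟩ := hbad p
    ⟨q, ⟨A, hA, fun r hrq => ⟨(hr r hrq).1, sdiff_nonempty.2 (hr r hrq).2⟩⟩, hqp⟩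
  obtain ⟨Q, hQ, hanti, hpre⟩ := exists_antichain_predense_of_dense hdense
  choose! A hA hsplit using hQ
  have hB := splits_biUnion_of_antichain hμ.aleph0_le hanti hpre hA hsplit
  obtain ⟨i, hi⟩ := hmax _ (muFree_insert_of_splits hinj hB)
  have hμ₁ : 1 < μ := one_lt_aleph0.trans_le hμ.aleph0_le
  exact sdiff_nonempty.1 (hB (single hμ₁ i)).2 (hi ▸ XInd_single_subset Y hμ₁ i)
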